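/- arXiv:1906.00199 — 5 statements merged into one kernel-verified Lean document; each statement's English description precedes it below -/
import Mathlib

section
/- Let Φ ∈ ℝ^{p×n}, Ψ ∈ ℝ^{q×n}, Ψ̃ ∈ ℝ^{q×m}, with L = ΨᵀΨ, L̃ = ΨᵀΨ̃, K = ΦᵀΦ, A = (L + nλI)⁻¹L̃ for λ > 0, and ε > 0. Define the empirical likelihood operator Ĉ = Φ(L + nλI)⁻¹Ψᵀ and prior operator C̃ = (1/m)Ψ̃Ψ̃ᵀ. Then (ĈC̃)ᵀ(ĈC̃Ĉᵀ + εI)⁻¹ = Ψ̃[AᵀKA + mεI]⁻¹AᵀΦᵀ. -/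
/-!
Write `M = Φ A`. Since `A = (L + nλI)⁻¹ Ψᵀ Ψ̃`, one has `Ĉ C̃ = (1/m) M Ψ̃ᵀ` and
`Ĉ C̃ Ĉᵀ = (1/m) M Mᵀ`, while `Aᵀ K A = Mᵀ M`. After the factor `1/m` cancels, the claim
is the push-through identity `Mᵀ (M Mᵀ + mεI)⁻¹ = (Mᵀ M + mεI)⁻¹ Mᵀ`, which follows from
`Mᵀ (M Mᵀ + cI) = (Mᵀ M + cI) Mᵀ` since both regularized Gram matrices are positive definite.
-/

open Matrix

namespace Matrix

variable {m n : Type*} [Fintype n]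

theorem inv_mul_eq_mul_inv_of_mul_eq_mul [Fintype m] [DecidableEq m] [DecidableEq n]
    {α : Type*} [CommRing α] {G : Matrix m m α} {H : Matrix n n α} {X : Matrix m n α}
    (hG : IsUnit G) (hH : IsUnit H) (h : G * X = X * H) : G⁻¹ * X = X * H⁻¹ :=
  calc G⁻¹ * X = G⁻¹ * X * (H * H⁻¹) := by
        rw [mul_nonsing_inv H ((isUnit_iff_isUnit_det H).mp hH), Matrix.mul_one]
    _ = G⁻¹ * (G * X) * H⁻¹ := by rw [h]; simp only [Matrix.mul_assoc]
    _ = X * H⁻¹ := by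
        rw [← Matrix.mul_assoc, nonsing_inv_mul G ((isUnit_iff_isUnit_det G).mp hG),
          Matrix.one_mul]

theorem smul_mul_inv_smul [DecidableEq n] {K : Type*} [Field K] {k : K} (hk : k ≠ 0)
    (X : Matrix m n K) {H : Matrix n n K} (hH : IsUnit H) :
    (k • X) * (k • H)⁻¹ = X * H⁻¹ := by
  have := invertibleOfNonzero hk
  rw [Matrix.inv_smul H k ((isUnit_iff_isUnit_det H).mp hH), Matrix.smul_mul, Matrix.mul_smul,
    smul_smul, invOf_eq_inv, mul_inv_cancel₀ hk, one_smul]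

section StarOrderedField

variable {𝕜 : Type*} [Field 𝕜] [PartialOrder 𝕜] [StarRing 𝕜] [StarOrderedRing 𝕜]

theorem posDef_mul_conjTranspose_add_smul_one [Fintype m] [DecidableEq m] (M : Matrix m n 𝕜)
    {c : 𝕜} (hc : 0 < c) : (M * Mᴴ + c • 1).PosDef := by
  refine PosDef.posSemidef_add (posSemidef_self_mul_conjTranspose M) ?_
  rw [smul_one_eq_diagonal]
  exact PosDef.diagonal fun _ ↦ hc

theorem conjTranspose_mul_inv_mul_conjTranspose_add_smul_one [Fintype m] [DecidableEq m]
    [DecidableEq n] (M : Matrix m n 𝕜) {c : 𝕜} (hc : 0 < c) :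
    Mᴴ * (M * Mᴴ + c • 1)⁻¹ = (Mᴴ * M + c • 1)⁻¹ * Mᴴ := by
  have hG := posDef_mul_conjTranspose_add_smul_one Mᴴ hc
  rw [conjTranspose_conjTranspose] at hG
  refine (inv_mul_eq_mul_inv_of_mul_eq_mul hG.isUnit
    (posDef_mul_conjTranspose_add_smul_one M hc).isUnit ?_).symm
  simp only [Matrix.add_mul, Matrix.mul_add, Matrix.mul_assoc, Matrix.smul_mul, Matrix.mul_smul,
    Matrix.one_mul, Matrix.mul_one]

end StarOrderedField

end Matrix

theorem empirical_dmo_form_general {p q n m : ℕ}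
    (Φ : Matrix (Fin p) (Fin n) ℝ) (Ψ : Matrix (Fin q) (Fin n) ℝ)
    (Ψt : Matrix (Fin q) (Fin m) ℝ) (l ε : ℝ) (hε : 0 < ε) :
    let L : Matrix (Fin n) (Fin n) ℝ := Ψᵀ * Ψ
    let Lt : Matrix (Fin n) (Fin m) ℝ := Ψᵀ * Ψt
    let K : Matrix (Fin n) (Fin n) ℝ := Φᵀ * Φ
    let A : Matrix (Fin n) (Fin m) ℝ := (L + ((n : ℝ) * l) • 1)⁻¹ * Lt
    let Chat : Matrix (Fin p) (Fin q) ℝ := Φ * (L + ((n : ℝ) * l) • 1)⁻¹ * Ψᵀ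
    let Ct : Matrix (Fin q) (Fin q) ℝ := (1 / (m : ℝ)) • (Ψt * Ψtᵀ)
    (Chat * Ct)ᵀ * (Chat * Ct * Chatᵀ + ε • (1 : Matrix (Fin p) (Fin p) ℝ))⁻¹
      = Ψt * (Aᵀ * K * A + ((m : ℝ) * ε) • (1 : Matrix (Fin m) (Fin m) ℝ))⁻¹ * Aᵀ * Φᵀ := by
  intro L Lt K A Chat Ct
  obtain rfl | hm := Nat.eq_zero_or_pos m
  · obtain rfl : Ψt = 0 := Subsingleton.elim _ _
    simp [Ct]
  set M := Φ * A
  set c : ℝ := m * ε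
  have hc : 0 < c := by positivity
  have hB : Chat * Ct = (1 / (m : ℝ)) • (M * Ψtᵀ) := by
    simp only [Chat, Ct, M, A, Lt, Matrix.mul_smul, Matrix.mul_assoc]
  have hH : Chat * Ct * Chatᵀ + ε • 1 = (1 / (m : ℝ)) • (M * Mᵀ + c • 1) := by
    have hcε : 1 / (m : ℝ) * (m * ε) = ε := by field_simp
    rw [hB, smul_add, smul_smul, hcε, Matrix.smul_mul]
    simp only [Chat, M, A, Lt, transpose_mul, transpose_transpose, Matrix.mul_assoc]
  have hK : Aᵀ * K * A = Mᵀ * M := by simp only [K, M, transpose_mul, Matrix.mul_assoc]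
  have hpush : Mᵀ * (M * Mᵀ + c • 1)⁻¹ = (Mᵀ * M + c • 1)⁻¹ * Mᵀ := by
    simpa using conjTranspose_mul_inv_mul_conjTranspose_add_smul_one M hc
  have hH_unit : IsUnit (M * Mᵀ + c • 1) := by
    simpa using (posDef_mul_conjTranspose_add_smul_one M hc).isUnit
  rw [hH, hB, hK, transpose_smul, transpose_mul, transpose_transpose,
    smul_mul_inv_smul (by positivity) _ hH_unit, Matrix.mul_assoc, hpush, transpose_mul]
  simp only [Matrix.mul_assoc]

/-- Nonparametric computational form of the empirical deconditional mean operator: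
`(ĈC̃)ᵀ (ĈC̃Ĉᵀ + εI)⁻¹ = Ψ̃ [AᵀKA + mεI]⁻¹ Aᵀ Φᵀ`. -/
theorem empirical_dmo_form {p q n m : ℕ}
    (Φ : Matrix (Fin p) (Fin n) ℝ) (Ψ : Matrix (Fin q) (Fin n) ℝ)
    (Ψt : Matrix (Fin q) (Fin m) ℝ) (l ε : ℝ) (hl : 0 < l) (hε : 0 < ε) :
    let L : Matrix (Fin n) (Fin n) ℝ := Ψᵀ * Ψ
    let Lt : Matrix (Fin n) (Fin m) ℝ := Ψᵀ * Ψt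
    let K : Matrix (Fin n) (Fin n) ℝ := Φᵀ * Φ
    let A : Matrix (Fin n) (Fin m) ℝ := (L + ((n : ℝ) * l) • 1)⁻¹ * Lt
    let Chat : Matrix (Fin p) (Fin q) ℝ := Φ * (L + ((n : ℝ) * l) • 1)⁻¹ * Ψᵀ
    let Ct : Matrix (Fin q) (Fin q) ℝ := (1 / (m : ℝ)) • (Ψt * Ψtᵀ)
    (Chat * Ct)ᵀ * (Chat * Ct * Chatᵀ + ε • (1 : Matrix (Fin p) (Fin p) ℝ))⁻¹
      = Ψt * (Aᵀ * K * A + ((m : ℝ) * ε) • (1 : Matrix (Fin m) (Fin m) ℝ))⁻¹ * Aᵀ * Φᵀ :=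
  empirical_dmo_form_general Φ Ψ Ψt l ε hε
end

section
/- With posterior mean m = CΦAΣ⁻¹z̃ where C = [ΦAΣ⁻¹AᵀΦᵀ + γ⁻²I]⁻¹, if Σ = σ²I then m = [ΦAAᵀΦᵀ + (σ²/γ²)I]⁻¹ΦAz̃, which equals the parametric DME estimator weights with ε = σ²/(mγ²). -/
open Matrix

namespace Matrix

variable {K ι κ : Type*} [Field K] [Fintype ι] [DecidableEq ι]

theorem inv_smul_one_of_ne_zero {c : K} (hc : c ≠ 0) :
    (c • (1 : Matrix ι ι K))⁻¹ = c⁻¹ • 1 :=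
  inv_eq_left_inv (by simp [smul_smul, hc])

-- Unlike `Matrix.inv_smul'`, `A` need not be invertible, since `mul_inv_rev` holds unconditionally.
theorem inv_smul_of_ne_zero (A : Matrix ι ι K) {c : K} (hc : c ≠ 0) :
    (c • A)⁻¹ = c⁻¹ • A⁻¹ := by
  rw [← smul_one_mul, mul_inv_rev, inv_smul_one_of_ne_zero hc, Matrix.mul_smul, Matrix.mul_one]

/-- The posterior mean of Bayesian linear regression with isotropic noise covariance `s • 1`
and prior precision `t • 1` is the ridge estimator with regularization `s * t`. -/
theorem inv_mul_add_smul_one_mul_inv_smul_one [Fintype κ] [DecidableEq κ]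
    (B : Matrix ι κ K) (D : Matrix κ ι K) {s : K} (hs : s ≠ 0) (t : K) :
    (B * (s • (1 : Matrix κ κ K))⁻¹ * D + t • (1 : Matrix ι ι K))⁻¹ * B *
        (s • (1 : Matrix κ κ K))⁻¹ =
      (B * D + (s * t) • 1)⁻¹ * B := by
  have hscaled : B * (s⁻¹ • (1 : Matrix κ κ K)) * D + t • (1 : Matrix ι ι K) =
      s⁻¹ • (B * D + (s * t) • 1) := by
    rw [smul_add, smul_smul, inv_mul_cancel_left₀ hs, Matrix.mul_smul, Matrix.mul_one,
      Matrix.smul_mul]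
  rw [inv_smul_one_of_ne_zero hs, hscaled, inv_smul_of_ne_zero _ (inv_ne_zero hs), inv_inv,
    Matrix.mul_smul, Matrix.mul_one, Matrix.smul_mul, smul_smul, inv_mul_cancel₀ hs, one_smul]

end Matrix

theorem ttblr_map_is_dme_general {p n m : ℕ} (hm : 0 < m)
    (Φ : Matrix (Fin p) (Fin n) ℝ) (A : Matrix (Fin n) (Fin m) ℝ)
    (zt : Fin m → ℝ) (γ σ : ℝ) (hσ : 0 < σ) :
    let Sg : Matrix (Fin m) (Fin m) ℝ := (σ ^ 2) • 1
    let C : Matrix (Fin p) (Fin p) ℝ :=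
      (Φ * A * Sg⁻¹ * Aᵀ * Φᵀ + (γ ^ 2)⁻¹ • (1 : Matrix (Fin p) (Fin p) ℝ))⁻¹
    let post_mean : Fin p → ℝ := (C * (Φ * A) * Sg⁻¹).mulVec zt
    let ε : ℝ := σ ^ 2 / ((m : ℝ) * γ ^ 2)
    post_mean
        = ((Φ * A * Aᵀ * Φᵀ + (σ ^ 2 / γ ^ 2) • (1 : Matrix (Fin p) (Fin p) ℝ))⁻¹ *
            (Φ * A)).mulVec zt ∧
      post_mean
        = ((Φ * A * Aᵀ * Φᵀ + ((m : ℝ) * ε) • (1 : Matrix (Fin p) (Fin p) ℝ))⁻¹ *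
            (Φ * A)).mulVec zt := by
  intro Sg C post_mean ε
  have hweights : C * (Φ * A) * Sg⁻¹ =
      (Φ * A * Aᵀ * Φᵀ + (σ ^ 2 / γ ^ 2) • (1 : Matrix (Fin p) (Fin p) ℝ))⁻¹ * (Φ * A) := by
    have h := inv_mul_add_smul_one_mul_inv_smul_one (Φ * A) (Aᵀ * Φᵀ)
      (pow_ne_zero 2 hσ.ne') (γ ^ 2)⁻¹
    rwa [← div_eq_mul_inv, ← Matrix.mul_assoc (Φ * A) Aᵀ,
      ← Matrix.mul_assoc (Φ * A * _) Aᵀ] at h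
  have hε : (m : ℝ) * ε = σ ^ 2 / γ ^ 2 := by
    have hm' : (m : ℝ) ≠ 0 := Nat.cast_ne_zero.2 hm.ne'
    simp only [ε]
    field_simp
  exact ⟨congrArg (·.mulVec zt) hweights, by rw [hε]; exact congrArg (·.mulVec zt) hweights⟩

/-- With `Σ = σ²I`, the TTBLR posterior mean `m = CΦAΣ⁻¹z̃` equals
`[ΦAAᵀΦᵀ + (σ²/γ²)I]⁻¹ΦAz̃`, i.e. the parametric DME estimator weights with
`ε = σ²/(mγ²)`. -/
theorem ttblr_map_is_dme {p n m : ℕ} (hm : 0 < m)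
    (Φ : Matrix (Fin p) (Fin n) ℝ) (A : Matrix (Fin n) (Fin m) ℝ)
    (zt : Fin m → ℝ) (γ σ : ℝ) (hγ : 0 < γ) (hσ : 0 < σ) :
    let Sg : Matrix (Fin m) (Fin m) ℝ := (σ ^ 2) • 1
    let C : Matrix (Fin p) (Fin p) ℝ :=
      (Φ * A * Sg⁻¹ * Aᵀ * Φᵀ + (γ ^ 2)⁻¹ • (1 : Matrix (Fin p) (Fin p) ℝ))⁻¹
    let post_mean : Fin p → ℝ := (C * (Φ * A) * Sg⁻¹).mulVec zt
    let ε : ℝ := σ ^ 2 / ((m : ℝ) * γ ^ 2)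
    post_mean
        = ((Φ * A * Aᵀ * Φᵀ + (σ ^ 2 / γ ^ 2) • (1 : Matrix (Fin p) (Fin p) ℝ))⁻¹ *
            (Φ * A)).mulVec zt ∧
      post_mean
        = ((Φ * A * Aᵀ * Φᵀ + ((m : ℝ) * ε) • (1 : Matrix (Fin p) (Fin p) ℝ))⁻¹ *
            (Φ * A)).mulVec zt :=
  ttblr_map_is_dme_general hm Φ A zt γ σ hσ
end

section
/- If C_{X|Y}C_{Y|X}C_{XX} = C_{XX}, where C_{Y|X}C_{XX} = C_{YX} = C_{YY}(C_{X|Y})ᵀ are factorizations of the joint operator, then C_{X|Y}C_{YY}(C_{X|Y})ᵀ = C_{XX}, and consequently the deconditional mean operator (C_{X|Y}C_{YY})ᵀ(C_{X|Y}C_{YY}(C_{X|Y})ᵀ)⁻¹ equals the conditional mean operator C_{Y|X} = C_{YX}C_{XX}⁻¹. -/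
open Matrix

section

variable {m n R : Type*} [Fintype m] [Fintype n]

theorem Matrix.mul_mul_eq_of_mul_eq_mul [Semiring R] {A : Matrix m n R} {K B : Matrix n m R}
    {T : Matrix n n R} {S : Matrix m m R}
    (hfac : K * S = T * B) (hcancel : A * K * S = S) : A * T * B = S := by
  rw [Matrix.mul_assoc, ← hfac, ← Matrix.mul_assoc, hcancel]

theorem Matrix.transpose_mul_mul_inv_eq_of_mul_eq_mul [DecidableEq m] [CommRing R]
    {A : Matrix m n R} {T : Matrix n n R} {K : Matrix n m R} {S : Matrix m m R}
    (hT : Tᵀ = T) (hfac : K * S = T * Aᵀ) (hS : IsUnit S) : (A * T)ᵀ * S⁻¹ = K := by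
  rw [transpose_mul, hT, ← hfac, mul_nonsing_inv_cancel_right _ _ (isUnit_iff_isUnit_det S |>.mp hS)]

end

theorem dmo_is_bayes_rule_general {p q : ℕ}
    (CXgY : Matrix (Fin p) (Fin q) ℝ) (CYgX : Matrix (Fin q) (Fin p) ℝ)
    (CYY : Matrix (Fin q) (Fin q) ℝ) (CXX : Matrix (Fin p) (Fin p) ℝ)
    (hYYsymm : CYYᵀ = CYY)
    (hXXinv : IsUnit CXX)
    (hjoint : CYgX * CXX = CYY * CXgYᵀ)
    (hcancel : CXgY * CYgX * CXX = CXX) :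
    CXgY * CYY * CXgYᵀ = CXX ∧
      (CXgY * CYY)ᵀ * (CXgY * CYY * CXgYᵀ)⁻¹ = CYgX := by
  have hXX : CXgY * CYY * CXgYᵀ = CXX := mul_mul_eq_of_mul_eq_mul hjoint hcancel
  refine ⟨hXX, ?_⟩
  rw [hXX]
  exact transpose_mul_mul_inv_eq_of_mul_eq_mul hYYsymm hjoint hXXinv

/-- Nonparametric Bayes' rule: if `C_{X|Y}C_{Y|X}C_{XX} = C_{XX}` and the joint
operator factorizes as `C_{Y|X}C_{XX} = C_{YX} = C_{YY}C_{X|Y}ᵀ`, then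
`C_{X|Y}C_{YY}C_{X|Y}ᵀ = C_{XX}` and the DMO equals `C_{Y|X} = C_{YX}C_{XX}⁻¹`. -/
theorem dmo_is_bayes_rule {p q : ℕ}
    (CXgY : Matrix (Fin p) (Fin q) ℝ) (CYgX : Matrix (Fin q) (Fin p) ℝ)
    (CYY : Matrix (Fin q) (Fin q) ℝ) (CXX : Matrix (Fin p) (Fin p) ℝ)
    (hYYsymm : CYYᵀ = CYY) (hXXsymm : CXXᵀ = CXX)
    (hXXinv : IsUnit CXX)
    (hjoint : CYgX * CXX = CYY * CXgYᵀ)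
    (hcancel : CXgY * CYgX * CXX = CXX) :
    CXgY * CYY * CXgYᵀ = CXX ∧
      (CXgY * CYY)ᵀ * (CXgY * CYY * CXgYᵀ)⁻¹ = CYgX :=
  dmo_is_bayes_rule_general CXgY CYgX CYY CXX hYYsymm hXXinv hjoint hcancel
end

section
/- For A ∈ ℝ^{n×m}, K ∈ ℝ^{n×n} symmetric positive semidefinite, and σ > 0, the matrix σ²[I − Aᵀ(KAAᵀ + σ²I)⁻¹KA]⁻¹ is well-defined (the bracketed matrix is invertible) and equals AᵀKA + σ²I. -/
/-!
With `P = AᵀKA` and `S = P + σ²I`, the push-through identity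
`Aᵀ(KAAᵀ + σ²I)⁻¹ = (AᵀKA + σ²I)⁻¹Aᵀ` turns the bracket into `I - S⁻¹P = σ²S⁻¹`, whose
inverse is `σ⁻²S`. Invertibility of `S` comes from positive semidefiniteness of `P`, and
that of `KAAᵀ + σ²I` from Sylvester's determinant identity.
-/

open Matrix

namespace Matrix

variable {m n 𝕜 : Type*} [Fintype m] [Fintype n] [DecidableEq m] [DecidableEq n]

theorem isUnit_mul_add_smul_one_comm [Field 𝕜] (X : Matrix m n 𝕜) (Y : Matrix n m 𝕜)
    {c : 𝕜} (hc : c ≠ 0) : IsUnit (X * Y + c • 1) ↔ IsUnit (Y * X + c • 1) := by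
  have hXY : X * Y + c • 1 = c • (1 + (c⁻¹ • X) * Y) := by
    rw [smul_add, smul_mul, smul_smul, mul_inv_cancel₀ hc, one_smul, add_comm]
  have hYX : Y * X + c • 1 = c • (1 + Y * (c⁻¹ • X)) := by
    rw [smul_add, Matrix.mul_smul, smul_smul, mul_inv_cancel₀ hc, one_smul, add_comm]
  rw [isUnit_iff_isUnit_det, isUnit_iff_isUnit_det, hXY, hYX, det_smul, det_smul,
    det_one_add_mul_comm]
  simp only [IsUnit.mul_iff, (Ne.isUnit hc).pow, true_and]

/-- The push-through identity. -/
theorem mul_inv_mul_add_smul_one_eq [CommRing 𝕜] {X : Matrix m n 𝕜} {Y : Matrix n m 𝕜}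
    {c : 𝕜}
    (hXY : IsUnit (X * Y + c • 1)) (hYX : IsUnit (Y * X + c • 1)) :
    Y * (X * Y + c • 1)⁻¹ = (Y * X + c • 1)⁻¹ * Y := by
  have intertwine : Y * (X * Y + c • 1) = (Y * X + c • 1) * Y := by
    simp only [Matrix.mul_add, Matrix.add_mul, Matrix.mul_assoc, Matrix.mul_smul, smul_mul,
      Matrix.mul_one, Matrix.one_mul]
  calc Y * (X * Y + c • 1)⁻¹
      = (Y * X + c • 1)⁻¹ * ((Y * X + c • 1) * Y) * (X * Y + c • 1)⁻¹ := by
        rw [← Matrix.mul_assoc, nonsing_inv_mul _ ((isUnit_iff_isUnit_det _).mp hYX),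
          Matrix.one_mul]
    _ = (Y * X + c • 1)⁻¹ * Y := by
        rw [← intertwine, Matrix.mul_assoc, Matrix.mul_assoc,
          mul_nonsing_inv _ ((isUnit_iff_isUnit_det _).mp hXY), Matrix.mul_one]

theorem one_sub_inv_mul_eq_smul_inv [CommRing 𝕜] {P : Matrix n n 𝕜} {c : 𝕜}
    (hS : IsUnit (P + c • 1)) : 1 - (P + c • 1)⁻¹ * P = c • (P + c • 1)⁻¹ := by
  have h := nonsing_inv_mul _ ((isUnit_iff_isUnit_det _).mp hS)
  rw [Matrix.mul_add, Matrix.mul_smul, Matrix.mul_one] at h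
  nth_rw 1 [← h]
  exact add_sub_cancel_left _ _

end Matrix

theorem ttbkr_alternative_covariance_general {n m : ℕ}
    (A : Matrix (Fin n) (Fin m) ℝ) (K : Matrix (Fin n) (Fin n) ℝ)
    (hK : K.PosSemidef) (σ : ℝ) (hσ : 0 < σ) :
    let M : Matrix (Fin m) (Fin m) ℝ :=
      1 - Aᵀ * (K * A * Aᵀ + (σ ^ 2) • (1 : Matrix (Fin n) (Fin n) ℝ))⁻¹ * K * A
    IsUnit M ∧ (σ ^ 2) • M⁻¹ = Aᵀ * K * A + (σ ^ 2) • (1 : Matrix (Fin m) (Fin m) ℝ) := by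
  intro M
  have hc : 0 < σ ^ 2 := by positivity
  have hS : IsUnit (Aᵀ * K * A + σ ^ 2 • 1) :=
    (PosDef.posSemidef_add (hK.conjTranspose_mul_mul_same A) (PosDef.one.smul hc)).isUnit
  have hS' : IsUnit (Aᵀ * (K * A) + σ ^ 2 • 1) := by rwa [← Matrix.mul_assoc]
  have hB : IsUnit (K * A * Aᵀ + σ ^ 2 • 1) :=
    (isUnit_mul_add_smul_one_comm (K * A) Aᵀ hc.ne').mpr hS'
  have hM : M = σ ^ 2 • (Aᵀ * K * A + σ ^ 2 • 1)⁻¹ := by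
    calc M = 1 - Aᵀ * (K * A * Aᵀ + σ ^ 2 • 1)⁻¹ * (K * A) := by
          simp only [M, Matrix.mul_assoc]
      _ = 1 - (Aᵀ * K * A + σ ^ 2 • 1)⁻¹ * (Aᵀ * K * A) := by
        rw [mul_inv_mul_add_smul_one_eq hB hS', Matrix.mul_assoc, ← Matrix.mul_assoc Aᵀ K A]
      _ = σ ^ 2 • (Aᵀ * K * A + σ ^ 2 • 1)⁻¹ := one_sub_inv_mul_eq_smul_inv hS
  have hMS : M * ((σ ^ 2)⁻¹ • (Aᵀ * K * A + σ ^ 2 • 1)) = 1 := by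
    rw [hM, smul_mul_smul_comm, mul_inv_cancel₀ hc.ne', one_smul,
      nonsing_inv_mul _ ((isUnit_iff_isUnit_det _).mp hS)]
  refine ⟨(isUnit_iff_isUnit_det M).mpr (isUnit_det_of_right_inverse hMS), ?_⟩
  rw [inv_eq_right_inv hMS, smul_smul, mul_inv_cancel₀ hc.ne', one_smul]

/-- Alternative form of the TTBKR marginal likelihood covariance:
`σ²[I − Aᵀ(KAAᵀ + σ²I)⁻¹KA]⁻¹` is well-defined and equals `AᵀKA + σ²I`. -/
theorem ttbkr_alternative_covariance {n m : ℕ}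
    (A : Matrix (Fin n) (Fin m) ℝ) (K : Matrix (Fin n) (Fin n) ℝ)
    (hK : K.PosSemidef) (hKsymm : Kᵀ = K) (σ : ℝ) (hσ : 0 < σ) :
    let M : Matrix (Fin m) (Fin m) ℝ :=
      1 - Aᵀ * (K * A * Aᵀ + (σ ^ 2) • (1 : Matrix (Fin n) (Fin n) ℝ))⁻¹ * K * A
    IsUnit M ∧ (σ ^ 2) • M⁻¹ = Aᵀ * K * A + (σ ^ 2) • (1 : Matrix (Fin m) (Fin m) ℝ) :=
  ttbkr_alternative_covariance_general A K hK σ hσ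
end

section
/- Let C_{X|Y}: H_ℓ → H_k be a bounded linear operator between Hilbert spaces such that (C_{X|Y})ᵀC_{X|Y} is invertible, and let C_{YY}: H_ℓ → H_ℓ be symmetric positive with image conditions ensuring all stated inverses exist. Then (C_{X|Y}C_{YY})ᵀ(C_{X|Y}C_{YY}(C_{X|Y})ᵀ)⁻¹ = ((C_{X|Y})ᵀC_{X|Y})⁻¹(C_{X|Y})ᵀ, i.e., the deconditional mean operator is the Moore–Penrose pseudo-inverse of the conditional mean operator. -/
open Matrix

namespace Matrix

variable {m n R : Type*} [Fintype m] [DecidableEq m] [Fintype n] [DecidableEq n] [CommRing R]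

/-- Push-through identity: `A (B S A) = (A B) S A`, so the two inverses can be traded. -/
theorem mul_mul_inv_mul_mul_mul_eq_inv_mul (A : Matrix n m R) (B : Matrix m n R)
    (S : Matrix n n R) (hAB : IsUnit (A * B)) (hBSA : IsUnit (B * S * A)) :
    S * A * (B * S * A)⁻¹ = (A * B)⁻¹ * A := by
  have hAB' : IsUnit (A * B).det := (isUnit_iff_isUnit_det _).mp hAB
  have hBSA' : IsUnit (B * S * A).det := (isUnit_iff_isUnit_det _).mp hBSA
  calc S * A * (B * S * A)⁻¹
      = (A * B)⁻¹ * (A * B) * (S * A) * (B * S * A)⁻¹ := by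
        rw [nonsing_inv_mul _ hAB', Matrix.one_mul]
    _ = (A * B)⁻¹ * A * (B * S * A) * (B * S * A)⁻¹ := by
        simp only [Matrix.mul_assoc]
    _ = (A * B)⁻¹ * A := by
        rw [Matrix.mul_assoc, mul_nonsing_inv _ hBSA', Matrix.mul_one]

end Matrix

/-- The deconditional mean operator is the Moore–Penrose pseudo-inverse of the
conditional mean operator: `(C C_YY)ᵀ (C C_YY Cᵀ)⁻¹ = (CᵀC)⁻¹ Cᵀ`. -/
theorem dmo_is_pseudoinverse {p q : ℕ}
    (C : Matrix (Fin p) (Fin q) ℝ) (hC : IsUnit (Cᵀ * C))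
    (CYY : Matrix (Fin q) (Fin q) ℝ) (hCYY : CYY.PosDef)
    (hE : IsUnit (C * CYY * Cᵀ)) :
    (C * CYY)ᵀ * (C * CYY * Cᵀ)⁻¹ = (Cᵀ * C)⁻¹ * Cᵀ := by
  have hsymm : CYYᵀ = CYY := (isHermitian_iff_isSymm.mp hCYY.isHermitian).eq
  rw [transpose_mul, hsymm]
  exact mul_mul_inv_mul_mul_mul_eq_inv_mul Cᵀ C CYY hC hE
end
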